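/- On the blowup X of P^2 at six points in general position, the classes of (−1)-curves (smooth rational curves with self-intersection −1) are exactly: the 6 exceptional curves, the strict transforms of the 15 lines through pairs of the points, and the strict transforms of the 6 conics through five of the points—27 in total. -/

import Mathlib

/-- The intersection form on `Pic X ≅ ℤ⁷` of the blowup of `ℙ²` in six points, in the
basis `H, E₁, …, E₆` with `H² = 1`, `Eᵢ² = −1`, `H·Eᵢ = 0`. -/
def picInter (D D' : Fin 7 → ℤ) : ℤ :=
  D 0 * D' 0 - ∑ i : Fin 6, D i.succ * D' i.succ

/-- The canonical class `K_X = −3H + Σ Eᵢ`. -/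
def canonicalClass : Fin 7 → ℤ := ![-3, 1, 1, 1, 1, 1, 1]

/-- The class of the exceptional curve `Eᵢ`. -/
def excClass (i : Fin 6) : Fin 7 → ℤ := fun l => if l = i.succ then 1 else 0

/-- The class `H − Eᵢ − Eⱼ` of the strict transform of the line through two points. -/
def lineClass (i j : Fin 6) : Fin 7 → ℤ :=
  fun l => if l = 0 then 1 else if l = i.succ ∨ l = j.succ then -1 else 0

/-- The class `2H − Σ_{l ≠ i} E_l` of the strict transform of the conic through five
of the six points (omitting the `i`-th). -/
def conicClass (i : Fin 6) : Fin 7 → ℤ :=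
  fun l => if l = 0 then 2 else if l = i.succ then 0 else -1

/-! Write `D = d H + Σ aᵢ Eᵢ`. The two conditions say `Σ aᵢ = 1 - 3d` and `Σ aᵢ² = d² + 1`, so
Cauchy–Schwarz `(Σ aᵢ)² ≤ 6 Σ aᵢ²` leaves only `d ∈ {0, 1, 2}`. For `d = 0, 1, 2` the integer
vector `b = a, -a, a + 1` respectively satisfies `Σ bᵢ² = Σ bᵢ`; since `bᵢ ≤ bᵢ²` for integers,
every `bᵢ` is `0` or `1`, and `Σ bᵢ = 1, 2, 1` counts the ones. -/

open Finset

theorem exists_finset_eq_ite_of_sum_sq_eq_sum {ι : Type*} [Fintype ι] [DecidableEq ι]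
    (b : ι → ℤ) (h : ∑ i, b i ^ 2 = ∑ i, b i) :
    ∃ S : Finset ι, (#S : ℤ) = ∑ i, b i ∧ b = fun i => if i ∈ S then 1 else 0 := by
  have hsum : ∑ i, (b i ^ 2 - b i) = 0 := by rw [sum_sub_distrib, h, sub_self]
  have hb : ∀ i, b i = 0 ∨ b i = 1 := fun i => by
    have hi := (sum_eq_zero_iff_of_nonneg fun i _ => sub_nonneg.2 (Int.le_self_sq (b i))).1
      hsum i (mem_univ i)
    have : b i * (b i - 1) = 0 := by linear_combination hi
    rcases mul_eq_zero.1 this with h0 | h1 <;> omega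
  have hb' : b = fun i => if i ∈ univ.filter (b · = 1) then 1 else 0 := by
    funext i
    rcases hb i with hi | hi <;> simp [hi]
  refine ⟨univ.filter (b · = 1), ?_, hb'⟩
  rw [hb']
  simp

theorem picInter_cons (d d' : ℤ) (a a' : Fin 6 → ℤ) :
    picInter (Fin.cons d a) (Fin.cons d' a') = d * d' - ∑ i, a i * a' i := by
  simp [picInter]

theorem canonicalClass_eq_cons : canonicalClass = Fin.cons (-3) fun _ => 1 := by
  decide

theorem picInter_cons_canonicalClass (d : ℤ) (a : Fin 6 → ℤ) :
    picInter (Fin.cons d a) canonicalClass = -3 * d - ∑ i, a i := by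
  simp [canonicalClass_eq_cons, picInter_cons, mul_comm]

theorem excClass_eq_cons (i : Fin 6) :
    excClass i = Fin.cons 0 fun k => if k = i then 1 else 0 := by
  funext l
  refine Fin.cases ?_ (fun k => ?_) l <;> simp [excClass, eq_comm]

theorem lineClass_eq_cons (i j : Fin 6) :
    lineClass i j = Fin.cons 1 (-fun k => if k = i ∨ k = j then 1 else 0) := by
  funext l
  refine Fin.cases ?_ (fun k => ?_) l <;> simp [lineClass, apply_ite Neg.neg]

theorem conicClass_eq_cons (i : Fin 6) :
    conicClass i = Fin.cons 2 ((fun k => if k = i then 1 else 0) - 1) := by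
  funext l
  refine Fin.cases ?_ (fun k => ?_) l <;> simp [conicClass, ite_sub]

theorem degree_eq_zero_or_one_or_two {d : ℤ} {a : Fin 6 → ℤ} (hs : ∑ i, a i = 1 - 3 * d)
    (hq : ∑ i, a i ^ 2 = d ^ 2 + 1) : d = 0 ∨ d = 1 ∨ d = 2 := by
  have hcs := sq_sum_le_card_mul_sum_sq (s := univ) (f := a)
  simp only [card_univ, Fintype.card_fin, Nat.cast_ofNat, hs, hq] at hcs
  have : (d + 1) * (d - 3) < 0 := by nlinarith
  have : -1 < d ∧ d < 3 := by constructor <;> nlinarith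
  omega

theorem exists_excClass_eq_cons {a : Fin 6 → ℤ} (hs : ∑ i, a i = 1) (hq : ∑ i, a i ^ 2 = 1) :
    ∃ i, excClass i = Fin.cons 0 a := by
  obtain ⟨S, hS, rfl⟩ := exists_finset_eq_ite_of_sum_sq_eq_sum a (hq.trans hs.symm)
  obtain ⟨i, rfl⟩ := card_eq_one.1 (by omega : #S = 1)
  exact ⟨i, by simp [excClass_eq_cons]⟩

theorem exists_lineClass_eq_cons {a : Fin 6 → ℤ} (hs : ∑ i, a i = -2) (hq : ∑ i, a i ^ 2 = 2) :
    ∃ i j, i ≠ j ∧ Fin.cons 1 a = lineClass i j := by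
  obtain ⟨S, hS, ha⟩ := exists_finset_eq_ite_of_sum_sq_eq_sum (-a)
    (by simp only [Pi.neg_apply, neg_sq, sum_neg_distrib, hs, hq, neg_neg])
  simp only [Pi.neg_apply, sum_neg_distrib, hs] at hS
  obtain ⟨i, j, hij, rfl⟩ := card_eq_two.1 (by omega : #S = 2)
  refine ⟨i, j, hij, ?_⟩
  rw [lineClass_eq_cons, ← neg_neg a, ha]
  simp

theorem exists_conicClass_eq_cons {a : Fin 6 → ℤ} (hs : ∑ i, a i = -5) (hq : ∑ i, a i ^ 2 = 5) :
    ∃ i, conicClass i = Fin.cons 2 a := by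
  obtain ⟨S, hS, ha⟩ := exists_finset_eq_ite_of_sum_sq_eq_sum (a + 1)
    (by simp [add_sq, sum_add_distrib, ← mul_sum, hs, hq])
  simp only [Pi.add_apply, Pi.one_apply, sum_add_distrib, hs] at hS
  obtain ⟨i, rfl⟩ := card_eq_one.1 (by simp at hS; omega : #S = 1)
  refine ⟨i, ?_⟩
  rw [conicClass_eq_cons, ← add_sub_cancel_right a 1, ha]
  simp

theorem mem_classes_of_picInter (D : Fin 7 → ℤ) (hself : picInter D D = -1)
    (hcan : picInter D canonicalClass = -1) :
    D ∈ Set.range excClass ∪ {D | ∃ i j : Fin 6, i ≠ j ∧ D = lineClass i j} ∪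
      Set.range conicClass := by
  rw [← Fin.cons_self_tail D] at hself hcan ⊢
  generalize D 0 = d, Fin.tail D = a at hself hcan ⊢
  rw [picInter_cons] at hself
  rw [picInter_cons_canonicalClass] at hcan
  have hs : ∑ i, a i = 1 - 3 * d := by linarith
  have hq : ∑ i, a i ^ 2 = d ^ 2 + 1 := by simp only [sq]; linarith
  rcases degree_eq_zero_or_one_or_two hs hq with rfl | rfl | rfl <;> norm_num at hs hq
  · exact Or.inl (Or.inl (exists_excClass_eq_cons hs hq))
  · exact Or.inl (Or.inr (exists_lineClass_eq_cons hs hq))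
  · exact Or.inr (exists_conicClass_eq_cons hs hq)

theorem picInter_of_mem_classes {D : Fin 7 → ℤ}
    (hD : D ∈ Set.range excClass ∪ {D | ∃ i j : Fin 6, i ≠ j ∧ D = lineClass i j} ∪
      Set.range conicClass) :
    picInter D D = -1 ∧ picInter D canonicalClass = -1 := by
  rcases hD with (⟨i, rfl⟩ | ⟨i, j, hij, rfl⟩) | ⟨i, rfl⟩
  · revert i; decide
  · revert i j; decide
  · revert i; decide

theorem classes_eq_coe_finset :
    Set.range excClass ∪ {D | ∃ i j : Fin 6, i ≠ j ∧ D = lineClass i j} ∪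
      Set.range conicClass =
    ↑(univ.image excClass ∪
      ({p : Fin 6 × Fin 6 | p.1 ≠ p.2} : Finset _).image (fun p => lineClass p.1 p.2) ∪
      univ.image conicClass) := by
  ext D
  simp [eq_comm, or_assoc]

/-- On the blowup `X` of `ℙ²` at six points in general position, the
`(−1)`-curve classes `D` (those with `D² = −1` and `D·K_X = −1` in
`Pic X ≅ ℤ⁷ = ⟨H, E₁, …, E₆⟩`) are exactly the 6 exceptional classes, the 15 classes of
lines through pairs of points, and the 6 classes of conics through five of the points —
27 in total. -/
theorem minus_one_classes_of_blowup_six_points :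
    {D : Fin 7 → ℤ | picInter D D = -1 ∧ picInter D canonicalClass = -1} =
      (Set.range excClass ∪
        {D | ∃ i j : Fin 6, i ≠ j ∧ D = lineClass i j} ∪
        Set.range conicClass) ∧
    {D : Fin 7 → ℤ | picInter D D = -1 ∧ picInter D canonicalClass = -1}.ncard = 27 := by
  have hclasses : {D : Fin 7 → ℤ | picInter D D = -1 ∧ picInter D canonicalClass = -1} =
      Set.range excClass ∪ {D | ∃ i j : Fin 6, i ≠ j ∧ D = lineClass i j} ∪
        Set.range conicClass :=
    Set.ext fun D => ⟨fun h => mem_classes_of_picInter D h.1 h.2, picInter_of_mem_classes⟩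
  refine ⟨hclasses, ?_⟩
  rw [hclasses, classes_eq_coe_finset, Set.ncard_coe_finset]
  decide
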